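/- arXiv:2204.10489 — 3 statements merged into one kernel-verified Lean document; each statement's English description precedes it below -/
import Mathlib

section
/- Suppose D_{m,ψ,φ} is bounded and J_w-symmetric on H²(β) with ψ not identically zero, and write ψ(z) = z^k h(z) with h(0) ≠ 0. Then k = m, and ψ(z) = (ψ^{(m)}(0) β(m)² / (m!)²) · K^{[m]}_{w·conj(φ(0))}(z). -/
open Complex Metric
open scoped InnerProductSpace ComplexConjugate

noncomputable section

/-- `H²(β)` modelled as `ℓ²`: an element `x` represents the analytic function with
Taylor coefficients `aₙ = x n / β n`, so that `‖x‖² = Σ |aₙ|² β(n)²`. -/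
abbrev Hs : Type := lp (fun _ : ℕ => ℂ) 2

/-- The analytic function associated to an element with data `x` (coefficients `x n / β n`). -/
def Fval (β : ℕ → ℝ) (x : ℕ → ℂ) (z : ℂ) : ℂ := ∑' n : ℕ, (x n / (β n : ℂ)) * z ^ n

/-- The conjugation `J_w` at the level of coefficient data: corresponds to
`(J_w f)(z) = conj (f (w * conj z))`, i.e. coefficients `conj aₙ * conj(w)ⁿ`. -/
def Jseq (w : ℂ) (x : ℕ → ℂ) : ℕ → ℂ := fun n => conj (x n) * (conj w) ^ n

/-- Data of the reproducing kernel `K_α(z) = Σ conj(α)ⁿ zⁿ / β(n)²`. -/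
def kerSeq (β : ℕ → ℝ) (α : ℂ) : ℕ → ℂ := fun n => (conj α) ^ n / (β n : ℂ)

/-- Data of the derivative kernel `K_α^{[m]}(z) = Σ_{n≥m} (n!/(n−m)!) conj(α)^{n−m} zⁿ / β(n)²`. -/
def kerDSeq (β : ℕ → ℝ) (m : ℕ) (α : ℂ) : ℕ → ℂ := fun n =>
  if m ≤ n then (n.factorial / (n - m).factorial : ℂ) * (conj α) ^ (n - m) / (β n : ℂ) else 0

/-- Standing assumptions on the weight sequence `β`. -/
def WeightOK (β : ℕ → ℝ) : Prop :=
  (∀ n, 0 < β n) ∧ β 0 = 1 ∧ 1 ≤ Filter.atTop.liminf (fun n : ℕ => (β n) ^ ((1:ℝ)/(n:ℝ)))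

/-- `φ` is an analytic self-map of the unit disc. -/
def SelfMapD (φ : ℂ → ℂ) : Prop :=
  AnalyticOnNhd ℂ φ (ball 0 1) ∧ ∀ z ∈ ball (0:ℂ) 1, φ z ∈ ball (0:ℂ) 1

/-- `T` acts as the generalized weighted composition operator
`D_{m,ψ,φ} f (z) = ψ(z) f^{(m)}(φ(z))` on the disc. -/
def IsGWCO (β : ℕ → ℝ) (m : ℕ) (ψ φ : ℂ → ℂ) (T : Hs →L[ℂ] Hs) : Prop :=
  ∀ (x : Hs), ∀ z ∈ ball (0:ℂ) 1, Fval β (T x) z = ψ z * iteratedDeriv m (Fval β x) (φ z)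

/-! Let `aₙⱼ = (T eₙ) j` be the matrix of `T` in the standard basis of `ℓ²`. The function of
`T eₙ` is `ψ(z) · n(n-1)⋯(n-m+1) φ(z)^(n-m) / β n`, so writing `ψ = zᵏ h` and comparing Taylor
coefficients at `0` shows that `T eₙ = 0` for `n < m`, and that the Taylor coefficients of `T eₙ`
below `k` vanish while the `k`-th one is `h(0) n(n-1)⋯(n-m+1) φ(0)^(n-m) / β n`.
`J_w`-symmetry means `aₙⱼ = wⁿ w̄ʲ aⱼₙ`. Now `aₘₖ ≠ 0`, while `aₖₘ = 0` whenever `k ≠ m`,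
hence `k = m`. Then `ψ` is a multiple of `T eₘ`, and symmetry turns its coefficients, the row
`aₘ·`, into the column `a·ₘ`, which is the derivative kernel at `w φ(0)̄` up to a constant. -/

open Filter Topology FormalMultilinearSeries

theorem ContinuousAt.eq_of_eventuallyEq_nhdsNE {X Y : Type*} [TopologicalSpace X]
    [TopologicalSpace Y] [T2Space Y] {f g : X → Y} {x : X} [(𝓝[≠] x).NeBot]
    (hf : ContinuousAt f x) (hg : ContinuousAt g x) (hfg : f =ᶠ[𝓝[≠] x] g) : f x = g x :=
  tendsto_nhds_unique (hf.tendsto.mono_left nhdsWithin_le_nhds)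
    ((hg.tendsto.mono_left nhdsWithin_le_nhds).congr' hfg.symm)

theorem HasFPowerSeriesAt.coeff_eq_of_eventuallyEq_pow_smul {𝕜 E : Type*}
    [NontriviallyNormedField 𝕜] [NormedAddCommGroup E] [NormedSpace 𝕜 E]
    {f G : 𝕜 → E} {p : FormalMultilinearSeries 𝕜 𝕜 E} {z₀ : 𝕜} {k : ℕ}
    (hp : HasFPowerSeriesAt f p z₀) (hG : ContinuousAt G z₀)
    (hfG : f =ᶠ[𝓝[≠] z₀] fun z => (z - z₀) ^ k • G z) :
    (∀ j < k, p.coeff j = 0) ∧ p.coeff k = G z₀ := by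
  have hf₀ : f z₀ = (z₀ - z₀) ^ k • G z₀ :=
    hp.continuousAt.eq_of_eventuallyEq_nhdsNE (by fun_prop) hfG
  induction k generalizing f p with
  | zero => simpa [← hp.coeff_zero 1] using hf₀
  | succ k ih =>
    rw [sub_self, zero_pow k.succ_ne_zero, zero_smul] at hf₀
    have hslope : dslope f z₀ =ᶠ[𝓝[≠] z₀] fun z => (z - z₀) ^ k • G z := by
      filter_upwards [hfG, self_mem_nhdsWithin] with z hz hne
      rw [dslope_of_ne _ hne, slope_def_module, hz, hf₀, sub_zero, smul_smul, pow_succ',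
        ← mul_assoc, inv_mul_cancel₀ (sub_ne_zero.mpr hne), one_mul]
    have hdslope := hp.has_fpower_series_dslope_fslope
    obtain ⟨hlt, hk⟩ := ih hdslope hslope
      (hdslope.continuousAt.eq_of_eventuallyEq_nhdsNE (by fun_prop) hslope)
    refine ⟨fun j hj => ?_, by simpa using hk⟩
    cases j with
    | zero => exact (hp.coeff_zero 1).trans hf₀
    | succ j => simpa using hlt j (by omega)

theorem iteratedDeriv_pow_mul_zero {𝕜 : Type*} [NontriviallyNormedField 𝕜] {h : 𝕜 → 𝕜}
    (m : ℕ) (hh : ContDiffAt 𝕜 m h 0) :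
    iteratedDeriv m (fun z => z ^ m * h z) 0 = m.factorial * h 0 := by
  rw [iteratedDeriv_fun_mul (by fun_prop) hh, Finset.sum_eq_single m]
  · simp [Nat.descFactorial_self]
  · intro i hi him
    have hlt : i < m := by grind
    simp [Nat.sub_eq_zero_iff_le, hlt]
  · simp

theorem WeightOK.eventually_pow_le {β : ℕ → ℝ} (hβ : WeightOK β) {r : ℝ} (hr0 : 0 ≤ r)
    (hr : r < 1) : ∀ᶠ n in atTop, r ^ n ≤ β n := by
  have hbdd : IsBoundedUnder (· ≥ ·) atTop fun n : ℕ => β n ^ ((1 : ℝ) / n) :=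
    isBoundedUnder_of ⟨0, fun n => Real.rpow_nonneg (hβ.1 n).le _⟩
  filter_upwards [eventually_lt_of_lt_liminf (hr.trans_le hβ.2.2) hbdd,
    eventually_ge_atTop 1] with n hn hn1
  calc r ^ n ≤ (β n ^ ((1 : ℝ) / n)) ^ n := pow_le_pow_left₀ hr0 hn.le n
    _ = β n := by
      rw [← Real.rpow_natCast, ← Real.rpow_mul (hβ.1 n).le, one_div,
        inv_mul_cancel₀ (by positivity), Real.rpow_one]

theorem one_le_radius_ofScalars_Fval {β : ℕ → ℝ} (hβ : WeightOK β) (x : Hs) :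
    1 ≤ (ofScalars ℂ fun n => x n / (β n : ℂ)).radius := by
  refine ENNReal.le_of_forall_nnreal_lt fun r hr => ?_
  have hr1 : (r : ℝ) < 1 := by exact_mod_cast hr
  refine le_radius_of_eventually_le _ ‖x‖ ?_
  filter_upwards [hβ.eventually_pow_le r.2 hr1] with n hn
  rw [ofScalars_norm, norm_div, norm_real, Real.norm_of_nonneg (hβ.1 n).le, div_mul_eq_mul_div,
    div_le_iff₀ (hβ.1 n)]
  exact mul_le_mul (lp.norm_apply_le_norm two_ne_zero x n) hn (by positivity) (norm_nonneg x)

theorem hasFPowerSeriesOnBall_Fval {β : ℕ → ℝ} (hβ : WeightOK β) (x : Hs) :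
    HasFPowerSeriesOnBall (Fval β x) (ofScalars ℂ fun n => x n / (β n : ℂ)) 0 1 := by
  have hr := one_le_radius_ofScalars_Fval hβ x
  have hsum : (ofScalars ℂ fun n => x n / (β n : ℂ)).sum = Fval β x := by
    funext z
    exact ofScalars_sum_eq (E := ℂ) _ z
  rw [← hsum]
  exact ((ofScalars ℂ fun n => x n / (β n : ℂ)).hasFPowerSeriesOnBall
    (zero_lt_one.trans_le hr)).mono one_pos hr

theorem Fval_single (β : ℕ → ℝ) (n : ℕ) :
    Fval β (lp.single 2 n (1 : ℂ) : Hs) = fun z => (β n : ℂ)⁻¹ * z ^ n := by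
  funext z
  rw [Fval, tsum_eq_single n fun j hj => by simp [lp.single_apply, hj]]
  simp

theorem kerDSeq_eq (β : ℕ → ℝ) (m : ℕ) (α : ℂ) (j : ℕ) :
    kerDSeq β m α j = j.descFactorial m * conj α ^ (j - m) / β j := by
  rw [kerDSeq]
  split_ifs with hj
  · rw [← Nat.factorial_mul_descFactorial hj, Nat.cast_mul,
      mul_div_cancel_left₀ _ (Nat.cast_ne_zero.mpr (Nat.factorial_ne_zero _))]
  · simp [Nat.descFactorial_eq_zero_iff_lt.mpr (not_le.mp hj)]

theorem adjoint_single_apply (T : Hs →L[ℂ] Hs) (n j : ℕ) :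
    ContinuousLinearMap.adjoint T (lp.single 2 n 1) j = conj (T (lp.single 2 j 1) n) :=
  calc ContinuousLinearMap.adjoint T (lp.single 2 n 1) j
      = ⟪(lp.single 2 j 1 : Hs), ContinuousLinearMap.adjoint T (lp.single 2 n 1)⟫_ℂ := by
        simp [lp.inner_single_left]
    _ = ⟪T (lp.single 2 j 1), (lp.single 2 n 1 : Hs)⟫_ℂ :=
        ContinuousLinearMap.adjoint_inner_right _ _ _
    _ = conj (T (lp.single 2 j 1) n) := by simp [lp.inner_single_right]

theorem apply_single_apply_of_symm {T : Hs →L[ℂ] Hs} {J : Hs → Hs} {w : ℂ}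
    (hJ : ∀ (x : Hs) (n : ℕ), (J x : ℕ → ℂ) n = Jseq w (x : ℕ → ℂ) n)
    (hsym : ∀ x : Hs, T x = J (ContinuousLinearMap.adjoint T (J x))) (n j : ℕ) :
    T (lp.single 2 n 1) j = w ^ n * conj w ^ j * T (lp.single 2 j 1) n := by
  have hJe : J (lp.single 2 n 1) = conj w ^ n • lp.single 2 n 1 := by
    ext i
    rw [hJ]
    by_cases hi : i = n <;> simp [Jseq, lp.single_apply, hi]
  rw [hsym, hJ, Jseq, hJe, map_smul, lp.coeFn_smul, Pi.smul_apply, smul_eq_mul,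
    adjoint_single_apply]
  simp only [map_mul, map_pow, conj_conj]
  ring

namespace IsGWCO

variable {β : ℕ → ℝ} {m : ℕ} {ψ φ : ℂ → ℂ} {T : Hs →L[ℂ] Hs}

theorem Fval_apply_single (hT : IsGWCO β m ψ φ T) (n : ℕ) {z : ℂ} (hz : z ∈ ball (0 : ℂ) 1) :
    Fval β (T (lp.single 2 n 1)) z =
      ψ z * ((β n : ℂ)⁻¹ * n.descFactorial m * φ z ^ (n - m)) := by
  rw [hT _ z hz, Fval_single]
  simp [mul_assoc]

theorem apply_single_eq_zero_of_lt (hβ : WeightOK β) (hT : IsGWCO β m ψ φ T) {n : ℕ}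
    (hn : n < m) : T (lp.single 2 n 1) = 0 := by
  have hzero : Fval β (T (lp.single 2 n 1)) =ᶠ[𝓝 0] 0 := by
    filter_upwards [ball_mem_nhds (0 : ℂ) one_pos] with z hz
    simp [hT.Fval_apply_single n hz, Nat.descFactorial_eq_zero_iff_lt.mpr hn]
  have hcoeff := (hasFPowerSeriesOnBall_Fval hβ _).hasFPowerSeriesAt.eq_zero_of_eventually hzero
  rw [ofScalars_series_eq_zero] at hcoeff
  ext j
  simpa [(hβ.1 j).ne'] using congrFun hcoeff j

theorem apply_single_of_eq_pow_mul {k : ℕ} {G : ℂ → ℂ} (hβ : WeightOK β)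
    (hT : IsGWCO β m ψ φ T) (hφ : ContinuousAt φ 0) (hG : ContinuousAt G 0)
    (hψ : ∀ z ∈ ball (0 : ℂ) 1, ψ z = z ^ k * G z) (n : ℕ) :
    (∀ j < k, T (lp.single 2 n 1) j = 0) ∧
      T (lp.single 2 n 1) k / β k = G 0 * ((β n : ℂ)⁻¹ * n.descFactorial m * φ 0 ^ (n - m)) := by
  have hfG : Fval β (T (lp.single 2 n 1)) =ᶠ[𝓝[≠] 0]
      fun z => (z - 0) ^ k • (G z * ((β n : ℂ)⁻¹ * n.descFactorial m * φ z ^ (n - m))) := by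
    filter_upwards [nhdsWithin_le_nhds (ball_mem_nhds (0 : ℂ) one_pos)] with z hz
    rw [hT.Fval_apply_single n hz, hψ z hz, sub_zero, smul_eq_mul, mul_assoc]
  obtain ⟨hlt, hk⟩ := (hasFPowerSeriesOnBall_Fval hβ _).hasFPowerSeriesAt
    |>.coeff_eq_of_eventuallyEq_pow_smul (by fun_prop) hfG
  refine ⟨fun j hj => ?_, by simpa using hk⟩
  simpa [(hβ.1 j).ne'] using hlt j hj

theorem eq_of_eq_pow_mul_of_symm {k : ℕ} {G : ℂ → ℂ} {w : ℂ} {J : Hs → Hs} (hβ : WeightOK β)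
    (hT : IsGWCO β m ψ φ T) (hφ : ContinuousAt φ 0) (hG : ContinuousAt G 0) (hG0 : G 0 ≠ 0)
    (hψ : ∀ z ∈ ball (0 : ℂ) 1, ψ z = z ^ k * G z)
    (hJ : ∀ (x : Hs) (n : ℕ), (J x : ℕ → ℂ) n = Jseq w (x : ℕ → ℂ) n)
    (hsym : ∀ x : Hs, T x = J (ContinuousLinearMap.adjoint T (J x))) : k = m := by
  have hcoeff := hT.apply_single_of_eq_pow_mul hβ hφ hG hψ
  have hmk : T (lp.single 2 m 1) k ≠ 0 := by
    intro hzero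
    have hlead := (hcoeff m).2
    rw [hzero, zero_div, Nat.descFactorial_self, Nat.sub_self, pow_zero, mul_one] at hlead
    exact mul_ne_zero hG0 (mul_ne_zero (inv_ne_zero (ofReal_ne_zero.mpr (hβ.1 m).ne'))
      (Nat.cast_ne_zero.mpr m.factorial_ne_zero)) hlead.symm
  by_contra hne
  apply hmk
  rw [apply_single_apply_of_symm hJ hsym m k]
  rcases Nat.lt_or_gt_of_ne hne with hlt | hgt
  · simp [hT.apply_single_eq_zero_of_lt hβ hlt]
  · rw [(hcoeff k).1 m hgt, mul_zero]

theorem eq_mul_Fval_kerDSeq_of_symm {h : ℂ → ℂ} {w : ℂ} {J : Hs → Hs} (hβ : WeightOK β)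
    (hT : IsGWCO β m ψ φ T) (hφ : ContinuousAt φ 0) (hh : ContDiffAt ℂ m h 0)
    (hψ : ∀ z ∈ ball (0 : ℂ) 1, ψ z = z ^ m * h z) (hw : ‖w‖ = 1)
    (hJ : ∀ (x : Hs) (n : ℕ), (J x : ℕ → ℂ) n = Jseq w (x : ℕ → ℂ) n)
    (hsym : ∀ x : Hs, T x = J (ContinuousLinearMap.adjoint T (J x))) {z : ℂ}
    (hz : z ∈ ball (0 : ℂ) 1) :
    ψ z = iteratedDeriv m ψ 0 * (β m : ℂ) ^ 2 / ((m.factorial : ℂ)) ^ 2 *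
      Fval β (kerDSeq β m (w * conj (φ 0))) z := by
  have hβC : ∀ j, (β j : ℂ) ≠ 0 := fun j => ofReal_ne_zero.mpr (hβ.1 j).ne'
  have hmC : (m.factorial : ℂ) ≠ 0 := Nat.cast_ne_zero.mpr m.factorial_ne_zero
  have hderiv : iteratedDeriv m ψ 0 = m.factorial * h 0 := by
    rw [EventuallyEq.iteratedDeriv_eq m (eventually_of_mem (ball_mem_nhds 0 one_pos) hψ)]
    exact iteratedDeriv_pow_mul_zero m hh
  have hψT : ψ z = β m / m.factorial * Fval β (T (lp.single 2 m 1)) z := by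
    rw [hT.Fval_apply_single m hz, Nat.descFactorial_self, Nat.sub_self, pow_zero]
    field_simp [hβC m]
  have hwc : w * conj w = 1 := by rw [mul_conj', hw]; simp
  rw [hψT, hderiv, Fval, Fval, ← tsum_mul_left, ← tsum_mul_left]
  congr 1
  funext j
  have hjm : T (lp.single 2 j 1) m =
      β m * (h 0 * ((β j : ℂ)⁻¹ * j.descFactorial m * φ 0 ^ (j - m))) := by
    rw [← (hT.apply_single_of_eq_pow_mul hβ hφ hh.continuousAt hψ j).2,
      mul_div_cancel₀ _ (hβC m)]
  rw [kerDSeq_eq, apply_single_apply_of_symm hJ hsym m j, hjm]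
  rcases lt_or_ge j m with hlt | hle
  · simp [Nat.descFactorial_eq_zero_iff_lt.mpr hlt]
  obtain ⟨i, rfl⟩ := Nat.exists_eq_add_of_le hle
  have hw' : w ^ m * conj w ^ (m + i) = conj w ^ i := by
    rw [pow_add, ← mul_assoc, ← mul_pow, hwc, one_pow, one_mul]
  rw [Nat.add_sub_cancel_left, map_mul, conj_conj, mul_pow, ← hw']
  field_simp

end IsGWCO

theorem stmt9_general (β : ℕ → ℝ) (hβ : WeightOK β) (m : ℕ)
    (w : ℂ) (hw : ‖w‖ = 1)
    (ψ φ : ℂ → ℂ) (hφ : SelfMapD φ)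
    (k : ℕ) (h : ℂ → ℂ) (hha : AnalyticOnNhd ℂ h (ball 0 1)) (hh0 : h 0 ≠ 0)
    (hfac : ∀ z ∈ ball (0:ℂ) 1, ψ z = z ^ k * h z)
    (T : Hs →L[ℂ] Hs) (hT : IsGWCO β m ψ φ T)
    (J : Hs → Hs) (hJ : ∀ (x : Hs) (n : ℕ), (J x : ℕ → ℂ) n = Jseq w (x : ℕ → ℂ) n)
    (hsym : ∀ x : Hs, T x = J (ContinuousLinearMap.adjoint T (J x))) :
    k = m ∧ ∀ z ∈ ball (0:ℂ) 1,
      ψ z = iteratedDeriv m ψ 0 * (β m : ℂ) ^ 2 / ((m.factorial : ℂ)) ^ 2 *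
        Fval β (kerDSeq β m (w * conj (φ 0))) z := by
  have h0 : (0 : ℂ) ∈ ball (0 : ℂ) 1 := mem_ball_self one_pos
  have hφ0 : ContinuousAt φ 0 := (hφ.1 0 h0).continuousAt
  obtain rfl : k = m :=
    hT.eq_of_eq_pow_mul_of_symm hβ hφ0 (hha 0 h0).continuousAt hh0 hfac hJ hsym
  exact ⟨rfl, fun z hz =>
    hT.eq_mul_Fval_kerDSeq_of_symm hβ hφ0 (hha 0 h0).contDiffAt hfac hw hJ hsym hz⟩

/-- if `ψ(z) = z^k h(z)`, `h(0) ≠ 0` and `D_{m,ψ,φ}` is `J_w`-symmetric,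
then `k = m` and `ψ = (ψ^{(m)}(0) β(m)²/(m!)²) K^{[m]}_{w conj(φ(0))}`. -/
theorem stmt9 (β : ℕ → ℝ) (hβ : WeightOK β) (m : ℕ) (hm : 1 ≤ m)
    (w : ℂ) (hw : ‖w‖ = 1)
    (ψ φ : ℂ → ℂ) (hφ : SelfMapD φ) (hψa : AnalyticOnNhd ℂ ψ (ball 0 1))
    (hψ0 : ∃ z ∈ ball (0:ℂ) 1, ψ z ≠ 0)
    (k : ℕ) (h : ℂ → ℂ) (hha : AnalyticOnNhd ℂ h (ball 0 1)) (hh0 : h 0 ≠ 0)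
    (hfac : ∀ z ∈ ball (0:ℂ) 1, ψ z = z ^ k * h z)
    (T : Hs →L[ℂ] Hs) (hT : IsGWCO β m ψ φ T)
    (J : Hs → Hs) (hJ : ∀ (x : Hs) (n : ℕ), (J x : ℕ → ℂ) n = Jseq w (x : ℕ → ℂ) n)
    (hsym : ∀ x : Hs, T x = J (ContinuousLinearMap.adjoint T (J x))) :
    k = m ∧ ∀ z ∈ ball (0:ℂ) 1,
      ψ z = iteratedDeriv m ψ 0 * (β m : ℂ) ^ 2 / ((m.factorial : ℂ)) ^ 2 *
        Fval β (kerDSeq β m (w * conj (φ 0))) z :=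
  stmt9_general β hβ m w hw ψ φ hφ k h hha hh0 hfac T hT J hJ hsym
end
end

section
/- Let m ≥ 1, a₀ ∈ 𝔻 nonzero, |w|=1, and define φ(z) = a₀ (constant) and ψ(z) = (β(m)² a₂/(m!)²) K^{[m]}_{w·conj(a₀)}(z) for some a₂ ∈ ℂ. If D_{m,ψ,φ} is bounded on H²(β), then it is J_w-symmetric. -/
/-!
With `φ ≡ a₀` the operator is `f ↦ ψ · f⁽ᵐ⁾(a₀)`, and `f⁽ᵐ⁾(a₀) = ⟪K^{[m]}_{a₀}, f⟫` (differentiate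
the power series termwise), so `D* K_α = conj (ψ α) K^{[m]}_{a₀}`. Since `ψ = c K^{[m]}_{w ā₀}`,
uniqueness of Taylor coefficients makes `D` the rank-one operator
`f ↦ c ⟪K^{[m]}_{a₀}, f⟫ K^{[m]}_{w ā₀}`. Both sides of the symmetry are then multiples of
`K^{[m]}_{w ā₀}`, and the multiples agree because `J K_α = K_{w ᾱ}`,
`J K^{[m]}_a = w̄ᵐ K^{[m]}_{w ā}` and `K^{[m]}_{w ā₀}(α) w̄ᵐ = (K_{w ᾱ})⁽ᵐ⁾(a₀)`.
-/

open Complex Metric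
open scoped InnerProductSpace ComplexConjugate

noncomputable section

open Filter Topology FormalMultilinearSeries
open scoped NNReal ENNReal

namespace FormalMultilinearSeries

variable {c : ℕ → ℂ}

theorem radius_le_radius_ofScalars_descFactorial_mul (k : ℕ) :
    (ofScalars ℂ c).radius ≤ (ofScalars ℂ fun n => (n.descFactorial k : ℂ) * c n).radius := by
  refine ENNReal.le_of_forall_nnreal_lt fun r hr => ?_
  obtain ⟨t, hrt, ht⟩ := ENNReal.lt_iff_exists_nnreal_btwn.mp hr
  obtain ⟨C, -, hC⟩ := (ofScalars ℂ c).norm_mul_pow_le_of_lt_radius ht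
  have ht0 : (0 : ℝ) < t := lt_of_le_of_lt r.coe_nonneg (by exact_mod_cast hrt)
  have hq : ‖(r / t : ℝ)‖ < 1 := by
    rw [Real.norm_of_nonneg (by positivity), div_lt_one ht0]
    exact_mod_cast hrt
  refine le_radius_of_summable_norm _ <| ((summable_pow_mul_geometric_of_norm_lt_one k hq).mul_left
    C).of_nonneg_of_le (fun n => by positivity) fun n => ?_
  simp only [ofScalars_norm] at hC ⊢
  calc ‖(n.descFactorial k : ℂ) * c n‖ * r ^ n
      = n.descFactorial k * (‖c n‖ * t ^ n) * (r / t : ℝ) ^ n := by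
        rw [norm_mul, Complex.norm_natCast, div_pow]
        field_simp
    _ ≤ n ^ k * C * (r / t : ℝ) ^ n := by
        gcongr
        · exact_mod_cast Nat.descFactorial_le_pow n k
        · exact hC n
    _ = C * (n ^ k * (r / t : ℝ) ^ n) := by ring

theorem deriv_tsum_descFactorial_mul_pow {z : ℂ} (hz : ‖z‖ₑ < (ofScalars ℂ c).radius) (k : ℕ) :
    deriv (fun w => ∑' n, (n.descFactorial k : ℂ) * c n * w ^ (n - k)) z
      = ∑' n, (n.descFactorial (k + 1) : ℂ) * c n * z ^ (n - (k + 1)) := by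
  obtain ⟨r, hzr, hr⟩ := ENNReal.lt_iff_exists_nnreal_btwn.mp hz
  have hzr' : ‖z‖ < r := by exact_mod_cast enorm_lt_coe.mp hzr
  have hr0 : (0 : ℝ) < r := (norm_nonneg z).trans_lt hzr'
  have hsum : Summable fun n => ‖(n.descFactorial k : ℂ) * c n‖ * (r : ℝ) ^ n / (r : ℝ) ^ k := by
    simpa only [ofScalars_norm] using
      ((ofScalars ℂ fun n => (n.descFactorial k : ℂ) * c n).summable_norm_mul_pow
      (hr.trans_le (radius_le_radius_ofScalars_descFactorial_mul k))).div_const _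
  have hbound : ∀ n, ∀ w ∈ ball (0 : ℂ) r,
      ‖(n.descFactorial k : ℂ) * c n * w ^ (n - k)‖
        ≤ ‖(n.descFactorial k : ℂ) * c n‖ * (r : ℝ) ^ n / (r : ℝ) ^ k := by
    intro n w hw
    rcases le_or_gt k n with hkn | hnk
    · rw [norm_mul, norm_pow, mul_div_assoc, div_eq_mul_inv, ← pow_sub₀ _ hr0.ne' hkn]
      gcongr
      exact (mem_ball_zero_iff.mp hw).le
    · simp [Nat.descFactorial_eq_zero_iff_lt.mpr hnk]
  refine (Complex.hasSum_deriv_of_summable_norm hsum (fun n => by fun_prop) isOpen_ball hbound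
    (mem_ball_zero_iff.mpr hzr')).tsum_eq.symm.trans (tsum_congr fun n => ?_)
  simp [Nat.descFactorial_succ, Nat.sub_sub]
  ring

theorem iteratedDeriv_ofScalarsSum {z : ℂ} (hz : ‖z‖ₑ < (ofScalars ℂ c).radius) (k : ℕ) :
    iteratedDeriv k (ofScalarsSum c) z = ∑' n, (n.descFactorial k : ℂ) * c n * z ^ (n - k) := by
  induction k generalizing z with
  | zero => simp [ofScalars_sum_eq]
  | succ k ih =>
    have hnhds : iteratedDeriv k (ofScalarsSum c) =ᶠ[𝓝 z]
        fun w => ∑' n, (n.descFactorial k : ℂ) * c n * w ^ (n - k) :=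
      eventually_of_mem (Metric.isOpen_eball.mem_nhds (mem_eball_zero_iff.mpr hz))
        fun w hw => ih (mem_eball_zero_iff.mp hw)
    rw [iteratedDeriv_succ, hnhds.deriv_eq, deriv_tsum_descFactorial_mul_pow hz]

theorem ofScalars_eq_of_ofScalarsSum_eventuallyEq {c' : ℕ → ℂ} (hc : 0 < (ofScalars ℂ c).radius)
    (hc' : 0 < (ofScalars ℂ c').radius)
    (h : ofScalarsSum (E := ℂ) c =ᶠ[𝓝 0] ofScalarsSum c') : c = c' :=
  ofScalars_series_injective ℂ ℂ <|
    ((ofScalars ℂ c).hasFPowerSeriesOnBall hc).hasFPowerSeriesAt.eq_formalMultilinearSeries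
      (((ofScalars ℂ c').hasFPowerSeriesOnBall hc').hasFPowerSeriesAt.congr h.symm)

end FormalMultilinearSeries

theorem WeightOK.exists_pow_le_mul {β : ℕ → ℝ} (hβ : WeightOK β) {r : ℝ} (hr0 : 0 ≤ r)
    (hr1 : r < 1) : ∃ C, ∀ n, r ^ n ≤ C * β n := by
  obtain ⟨hpos, -, hlim⟩ := hβ
  obtain ⟨s, hrs, hs1⟩ := exists_between hr1
  have hs0 : 0 < s := hr0.trans_lt hrs
  have hev : ∀ᶠ n in atTop, s ^ n ≤ β n := by
    filter_upwards [eventually_lt_of_lt_liminf (hs1.trans_le hlim)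
      (isBoundedUnder_of ⟨0, fun n => Real.rpow_nonneg (hpos n).le _⟩),
      eventually_ne_atTop 0] with n hn hn0
    simpa [one_div, Real.rpow_inv_natCast_pow (hpos n).le hn0] using
      pow_le_pow_left₀ hs0.le hn.le n
  have hlim0 : Tendsto (fun n => r ^ n / β n) atTop (𝓝 0) := by
    refine tendsto_of_tendsto_of_tendsto_of_le_of_le' tendsto_const_nhds
      (tendsto_pow_atTop_nhds_zero_of_lt_one (div_nonneg hr0 hs0.le) ((div_lt_one hs0).mpr hrs))
      (Eventually.of_forall fun n => div_nonneg (pow_nonneg hr0 n) (hpos n).le) ?_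
    filter_upwards [hev] with n hn
    rw [div_pow]
    exact div_le_div_of_nonneg_left (pow_nonneg hr0 n) (pow_pos hs0 n) hn
  obtain ⟨C, hC⟩ := hlim0.bddAbove_range
  exact ⟨C, fun n => (div_le_iff₀ (hpos n)).mp (hC ⟨n, rfl⟩)⟩

theorem WeightOK.one_le_radius_ofScalars_div {β : ℕ → ℝ} (hβ : WeightOK β) (x : Hs) :
    1 ≤ (ofScalars ℂ fun n => (x : ℕ → ℂ) n / β n).radius := by
  refine ENNReal.le_of_forall_nnreal_lt fun r hr => ?_
  obtain ⟨C, hC⟩ := hβ.exists_pow_le_mul r.coe_nonneg (by exact_mod_cast hr)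
  refine le_radius_of_bound _ (‖x‖ * C) fun n => ?_
  rw [ofScalars_norm, norm_div, Complex.norm_real, Real.norm_of_nonneg (hβ.1 n).le,
    div_mul_eq_mul_div, div_le_iff₀ (hβ.1 n), mul_assoc]
  exact mul_le_mul (lp.norm_apply_le_norm two_ne_zero x n) (hC n) (by positivity) (norm_nonneg _)

theorem kerDSeq_eq_descFactorial (β : ℕ → ℝ) (m : ℕ) (γ : ℂ) (n : ℕ) :
    kerDSeq β m γ n = n.descFactorial m * conj γ ^ (n - m) / β n := by
  unfold kerDSeq
  split_ifs with h
  · rw [← Nat.factorial_mul_descFactorial h, Nat.cast_mul,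
      mul_div_cancel_left₀ _ (Nat.cast_ne_zero.mpr (Nat.factorial_ne_zero _))]
  · simp [Nat.descFactorial_eq_zero_iff_lt.mpr (not_le.mp h)]

theorem WeightOK.radius_ofScalars_kerDSeq_pos {β : ℕ → ℝ} (hβ : WeightOK β) (m : ℕ) (γ : ℂ) :
    0 < (ofScalars ℂ fun n => kerDSeq β m γ n / β n).radius := by
  -- `(β n)⁻¹ ≤ C 2ⁿ`, so the coefficients grow at most like `(4 (‖γ‖ + 1))ⁿ`
  obtain ⟨C, hC⟩ := hβ.exists_pow_le_mul (r := 2⁻¹) (by norm_num) (by norm_num)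
  have hinv : ∀ n, (β n)⁻¹ ≤ C * 2 ^ n := fun n => by
    rw [inv_le_iff_one_le_mul₀ (hβ.1 n)]
    calc (1 : ℝ) = 2 ^ n * 2⁻¹ ^ n := by rw [← mul_pow]; norm_num
      _ ≤ 2 ^ n * (C * β n) := by gcongr; exact hC n
      _ = C * 2 ^ n * β n := by ring
  have hρ : 0 < (((4 * (‖γ‖₊ + 1))⁻¹ : ℝ≥0) : ℝ≥0∞) := ENNReal.coe_pos.mpr (by positivity)
  have hcoeff : (fun n => kerDSeq β m γ n / β n)
      = fun n => (n.descFactorial m : ℂ) * (conj γ ^ (n - m) / β n / β n) := by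
    ext n
    rw [kerDSeq_eq_descFactorial]
    ring
  rw [hcoeff]
  refine hρ.trans_le ((le_radius_of_bound _ (C ^ 2) fun n => ?_).trans
    (radius_le_radius_ofScalars_descFactorial_mul m))
  rw [ofScalars_norm, norm_div, norm_div, Complex.norm_real, Real.norm_of_nonneg (hβ.1 n).le,
    norm_pow, RCLike.norm_conj]
  have hγ : ‖γ‖ ^ (n - m) ≤ (‖γ‖ + 1) ^ n :=
    (pow_le_pow_left₀ (norm_nonneg γ) (by linarith) _).trans
      (pow_le_pow_right₀ (by linarith [norm_nonneg γ]) (Nat.sub_le n m))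
  have hβinv : 0 ≤ (β n)⁻¹ := inv_nonneg.mpr (hβ.1 n).le
  have hC0 : 0 ≤ C * 2 ^ n := hβinv.trans (hinv n)
  push_cast
  calc ‖γ‖ ^ (n - m) / β n / β n * ((4 * (‖γ‖ + 1))⁻¹) ^ n
      = ‖γ‖ ^ (n - m) * (β n)⁻¹ * (β n)⁻¹ * ((4 * (‖γ‖ + 1))⁻¹) ^ n := by ring
    _ ≤ (‖γ‖ + 1) ^ n * (C * 2 ^ n) * (C * 2 ^ n) * ((4 * (‖γ‖ + 1))⁻¹) ^ n := by
        gcongr <;> exact hinv n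
    _ = C ^ 2 * (2 * 2 * (‖γ‖ + 1) * (4 * (‖γ‖ + 1))⁻¹) ^ n := by
        rw [mul_pow, mul_pow, mul_pow]
        ring
    _ = C ^ 2 := by
        rw [show 2 * 2 * (‖γ‖ + 1) * (4 * (‖γ‖ + 1))⁻¹ = 1 by field_simp; ring, one_pow, mul_one]

theorem Fval_eq_ofScalarsSum (β : ℕ → ℝ) (x : ℕ → ℂ) :
    Fval β x = ofScalarsSum fun n => x n / β n := by
  ext z
  simp [Fval, ofScalars_sum_eq]

theorem WeightOK.iteratedDeriv_Fval {β : ℕ → ℝ} (hβ : WeightOK β) (m : ℕ) (x : Hs) {a : ℂ}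
    (ha : ‖a‖ < 1) :
    iteratedDeriv m (Fval β x) a = ∑' n, conj (kerDSeq β m a n) * (x : ℕ → ℂ) n := by
  have ha' : ‖a‖ₑ < (ofScalars ℂ fun n => (x : ℕ → ℂ) n / β n).radius :=
    lt_of_lt_of_le (by simpa [← ofReal_norm] using ha) (hβ.one_le_radius_ofScalars_div x)
  rw [Fval_eq_ofScalarsSum, iteratedDeriv_ofScalarsSum ha']
  refine tsum_congr fun n => ?_
  rw [kerDSeq_eq_descFactorial]
  simp only [map_div₀, map_mul, map_pow, map_natCast, Complex.conj_conj, Complex.conj_ofReal]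
  ring

theorem inner_eq_Fval_of_coe_eq_kerSeq {β : ℕ → ℝ} {μ : ℂ} {k : Hs}
    (hk : (k : ℕ → ℂ) = kerSeq β μ) (x : Hs) : ⟪k, x⟫_ℂ = Fval β x μ := by
  rw [lp.inner_eq_tsum, Fval, hk]
  refine tsum_congr fun n => ?_
  simp only [kerSeq, RCLike.inner_apply, map_div₀, map_pow, Complex.conj_conj, Complex.conj_ofReal]
  ring

theorem Jseq_kerSeq (β : ℕ → ℝ) (w α : ℂ) : Jseq w (kerSeq β α) = kerSeq β (w * conj α) := by
  ext n
  simp only [Jseq, kerSeq, map_div₀, map_pow, map_mul, Complex.conj_conj, Complex.conj_ofReal]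
  ring

theorem Jseq_kerDSeq (β : ℕ → ℝ) (m : ℕ) (w a : ℂ) (n : ℕ) :
    Jseq w (kerDSeq β m a) n = conj w ^ m * kerDSeq β m (w * conj a) n := by
  have hsplit : (n.descFactorial m : ℂ) * conj w ^ n
      = n.descFactorial m * (conj w ^ m * conj w ^ (n - m)) := by
    rcases le_or_gt m n with h | h
    · rw [← pow_add, Nat.add_sub_cancel' h]
    · simp [Nat.descFactorial_eq_zero_iff_lt.mpr h]
  simp only [Jseq, kerDSeq_eq_descFactorial, map_div₀, map_mul, map_pow, map_natCast,
    Complex.conj_conj, Complex.conj_ofReal]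
  linear_combination (a ^ (n - m) / β n) * hsplit

theorem Fval_kerDSeq_mul_conj_pow (β : ℕ → ℝ) (m : ℕ) (w a α : ℂ) :
    Fval β (kerDSeq β m (w * conj a)) α * conj w ^ m
      = ∑' n, conj (kerDSeq β m a n) * kerSeq β (w * conj α) n := by
  rw [Fval, ← tsum_mul_right]
  refine tsum_congr fun n => ?_
  have hJ := Jseq_kerDSeq β m w a n
  simp only [Jseq] at hJ
  simp only [kerSeq, map_mul, Complex.conj_conj, mul_pow]
  linear_combination (-(α ^ n / β n)) * hJ

section ConstantComposition

variable {β : ℕ → ℝ} {m : ℕ} {ψ : ℂ → ℂ} {a₀ : ℂ} {T : Hs →L[ℂ] Hs}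

theorem IsGWCO.adjoint_apply_of_coe_eq_kerSeq (hβ : WeightOK β) (ha₀ : ‖a₀‖ < 1)
    (hT : IsGWCO β m ψ (fun _ => a₀) T) {α : ℂ} (hα : α ∈ ball (0 : ℂ) 1) {k : Hs}
    (hk : (k : ℕ → ℂ) = kerSeq β α) (n : ℕ) :
    (ContinuousLinearMap.adjoint T k : ℕ → ℂ) n = conj (ψ α) * kerDSeq β m a₀ n := by
  have hsingle : ∑' j, conj (kerDSeq β m a₀ j) * ((lp.single 2 n (1 : ℂ) : Hs) : ℕ → ℂ) j
      = conj (kerDSeq β m a₀ n) := by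
    rw [tsum_eq_single n fun j hj => by simp [lp.single_apply, hj]]
    simp
  calc (ContinuousLinearMap.adjoint T k : ℕ → ℂ) n
      = ⟪(lp.single 2 n (1 : ℂ) : Hs), ContinuousLinearMap.adjoint T k⟫_ℂ := by
        simp [lp.inner_single_left]
    _ = conj ⟪k, T (lp.single 2 n 1)⟫_ℂ := by
        rw [ContinuousLinearMap.adjoint_inner_right, inner_conj_symm]
    _ = conj (ψ α) * kerDSeq β m a₀ n := by
        rw [inner_eq_Fval_of_coe_eq_kerSeq hk, hT _ α hα, hβ.iteratedDeriv_Fval m _ ha₀, hsingle]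
        simp

theorem IsGWCO.coe_apply_eq_smul_kerDSeq (hβ : WeightOK β)
    (hT : IsGWCO β m ψ (fun _ => a₀) T) {c γ : ℂ}
    (hψ : ∀ z ∈ ball (0 : ℂ) 1, ψ z = c * Fval β (kerDSeq β m γ) z) (x : Hs) :
    (T x : ℕ → ℂ) = (c * iteratedDeriv m (Fval β x) a₀) • kerDSeq β m γ := by
  set d := c * iteratedDeriv m (Fval β x) a₀
  have hcoeff : (fun n => (T x : ℕ → ℂ) n / β n) = d • fun n => kerDSeq β m γ n / β n := by
    refine ofScalars_eq_of_ofScalarsSum_eventuallyEq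
      (zero_lt_one.trans_le (hβ.one_le_radius_ofScalars_div _)) ?_ ?_
    · rw [ofScalars_smul]
      exact (hβ.radius_ofScalars_kerDSeq_pos m γ).trans_le radius_le_smul
    · filter_upwards [ball_mem_nhds (0 : ℂ) one_pos] with z hz
      rw [← Fval_eq_ofScalarsSum, hT x z hz, hψ z hz, ofScalars_sum_eq, Fval, ← tsum_mul_left,
        ← tsum_mul_right]
      exact tsum_congr fun n => by simp only [Pi.smul_apply, smul_eq_mul, d]; ring
  ext n
  have hβn : (β n : ℂ) ≠ 0 := Complex.ofReal_ne_zero.mpr (hβ.1 n).ne'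
  have := congrFun hcoeff n
  simp only [Pi.smul_apply, smul_eq_mul] at this ⊢
  rwa [← mul_div_assoc, div_left_inj' hβn] at this

end ConstantComposition

theorem stmt11_general (β : ℕ → ℝ) (hβ : WeightOK β) (m : ℕ)
    (w a₀ a₂ : ℂ) (ha₀ : a₀ ∈ ball (0:ℂ) 1)
    (ψ φ : ℂ → ℂ) (hφdef : ∀ z, φ z = a₀)
    (hψdef : ∀ z ∈ ball (0:ℂ) 1,
      ψ z = (β m : ℂ) ^ 2 * a₂ / ((m.factorial : ℂ)) ^ 2 *
        Fval β (kerDSeq β m (w * conj a₀)) z)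
    (T : Hs →L[ℂ] Hs) (hT : IsGWCO β m ψ φ T)
    (J : Hs → Hs) (hJ : ∀ (x : Hs) (n : ℕ), (J x : ℕ → ℂ) n = Jseq w (x : ℕ → ℂ) n)
    (K : ℂ → Hs) (hK : ∀ α n, (K α : ℕ → ℂ) n = kerSeq β α n) :
    ∀ α ∈ ball (0:ℂ) 1,
      J (ContinuousLinearMap.adjoint T (K α)) = T (J (K α)) := by
  obtain rfl : φ = fun _ => a₀ := funext hφdef
  have ha₀' : ‖a₀‖ < 1 := mem_ball_zero_iff.mp ha₀
  have hK' : ∀ α, (K α : ℕ → ℂ) = kerSeq β α := fun α => funext (hK α)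
  intro α hα
  have hJK : J (K α) = K (w * conj α) := lp.ext <| funext fun n => by
    rw [hJ, hK', hK', Jseq_kerSeq]
  apply lp.ext
  ext n
  have hJD := Jseq_kerDSeq β m w a₀ n
  rw [hJ, Jseq, hT.adjoint_apply_of_coe_eq_kerSeq hβ ha₀' hα (hK' α), hJK,
    hT.coe_apply_eq_smul_kerDSeq hβ hψdef, hβ.iteratedDeriv_Fval m _ ha₀', hK',
    ← Fval_kerDSeq_mul_conj_pow, ← mul_assoc, ← hψdef α hα]
  simp only [Jseq] at hJD
  simp only [Pi.smul_apply, smul_eq_mul, map_mul, Complex.conj_conj]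
  linear_combination ψ α * hJD

/-- constant `φ = a₀ ≠ 0` with `ψ = (β(m)² a₂/(m!)²) K^{[m]}_{w conj(a₀)}`
gives a `J_w`-symmetric operator. -/
theorem stmt11 (β : ℕ → ℝ) (hβ : WeightOK β) (m : ℕ) (hm : 1 ≤ m)
    (w a₀ a₂ : ℂ) (hw : ‖w‖ = 1) (ha₀ : a₀ ∈ ball (0:ℂ) 1) (ha₀0 : a₀ ≠ 0)
    (ψ φ : ℂ → ℂ) (hφdef : ∀ z, φ z = a₀)
    (hψdef : ∀ z ∈ ball (0:ℂ) 1,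
      ψ z = (β m : ℂ) ^ 2 * a₂ / ((m.factorial : ℂ)) ^ 2 *
        Fval β (kerDSeq β m (w * conj a₀)) z)
    (T : Hs →L[ℂ] Hs) (hT : IsGWCO β m ψ φ T)
    (J : Hs → Hs) (hJ : ∀ (x : Hs) (n : ℕ), (J x : ℕ → ℂ) n = Jseq w (x : ℕ → ℂ) n)
    (K : ℂ → Hs) (hK : ∀ α n, (K α : ℕ → ℂ) n = kerSeq β α n) :
    ∀ α ∈ ball (0:ℂ) 1,
      J (ContinuousLinearMap.adjoint T (K α)) = T (J (K α)) :=
  stmt11_general β hβ m w a₀ a₂ ha₀ ψ φ hφdef hψdef T hT J hJ K hK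
end
end

section
/- Suppose D_{m,ψ,φ} is bounded and J_w-symmetric on H²(β) with ψ not identically zero, and additionally D_{m,ψ,φ} is Hermitian (self-adjoint). Then conj(ψ(0)) = conj(w)^m ψ(0) and conj(ψ(0) φ(0)) = conj(w)^{m+1} ψ(0) φ(0); in particular if ψ(0)φ(0) ≠ 0 then conj(φ(0)) = conj(w) φ(0). -/
open Complex Metric
open scoped InnerProductSpace ComplexConjugate

noncomputable section

/-!
Hermitian and `J_w`-symmetric together give `T = J T J`. On the basis vector `e_k` (the monomial
`z^k / β(k)`) one has `J e_k = conj(w)^k e_k`, and the constant coefficient of `T e_k` is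
`ψ(0) (z^k / β(k))^{(m)}(φ(0))`. Comparing constant coefficients yields
`ψ(0) φ(0)^{k-m} = conj(ψ(0)) w^k conj(φ(0))^{k-m}` for every `k ≥ m`; the cases `k = m` and
`k = m + 1`, with `w conj(w) = 1`, give the three claims.
-/

lemma Fval_apply_zero (β : ℕ → ℝ) (x : ℕ → ℂ) : Fval β x 0 = x 0 / β 0 := by
  rw [Fval, tsum_eq_single 0 fun n hn => by simp [zero_pow hn]]
  simp

lemma Fval_single_s15 (β : ℕ → ℝ) (k : ℕ) (c : ℂ) :
    Fval β (Pi.single k c) = fun z => c / β k * z ^ k := by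
  funext z
  rw [Fval, tsum_eq_single k fun n hn => by simp [Pi.single_eq_of_ne hn]]
  simp

lemma Jseq_single (w : ℂ) (k : ℕ) (c : ℂ) :
    Jseq w (Pi.single k c) = Pi.single k (conj c * conj w ^ k) := by
  funext n
  rcases eq_or_ne n k with rfl | hn
  · simp [Jseq]
  · simp [Jseq, Pi.single_eq_of_ne hn]

lemma iteratedDeriv_Fval_single (β : ℕ → ℝ) (m k : ℕ) (c z : ℂ) :
    iteratedDeriv m (Fval β (Pi.single k c)) z = c / β k * (k.descFactorial m * z ^ (k - m)) := by
  rw [Fval_single_s15, iteratedDeriv_const_mul_field, iteratedDeriv_pow]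

namespace IsGWCO

variable {β : ℕ → ℝ} {m : ℕ} {ψ φ : ℂ → ℂ} {T : Hs →L[ℂ] Hs}

lemma apply_single_apply_zero (hT : IsGWCO β m ψ φ T) (k : ℕ) (c : ℂ) :
    (T (lp.single 2 k c) : ℕ → ℂ) 0 / β 0
      = ψ 0 * (c / β k * (k.descFactorial m * φ 0 ^ (k - m))) := by
  rw [← Fval_apply_zero, hT _ 0 (mem_ball_self one_pos), lp.coeFn_single,
    iteratedDeriv_Fval_single]

lemma psi_mul_phi_pow_eq (hT : IsGWCO β m ψ φ T) {w : ℂ} {J : Hs → Hs}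
    (hJ : ∀ (x : Hs) (n : ℕ), (J x : ℕ → ℂ) n = Jseq w (x : ℕ → ℂ) n)
    (hJTJ : ∀ x : Hs, T x = J (T (J x))) {k : ℕ} (hβk : β k ≠ 0) (hk : m ≤ k) :
    ψ 0 * φ 0 ^ (k - m) = conj (ψ 0) * w ^ k * conj (φ 0) ^ (k - m) := by
  have hJe : J (lp.single 2 k 1) = lp.single 2 k (conj w ^ k) := by
    ext n
    rw [hJ, lp.coeFn_single, Jseq_single, lp.coeFn_single, map_one, one_mul]
  have hcoeff : (T (lp.single 2 k 1) : ℕ → ℂ) 0 / β 0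
      = conj ((T (J (lp.single 2 k 1)) : ℕ → ℂ) 0 / β 0) := by
    conv_lhs => rw [hJTJ, hJ, Jseq, pow_zero, mul_one]
    rw [map_div₀, conj_ofReal]
  rw [hJe, hT.apply_single_apply_zero, hT.apply_single_apply_zero] at hcoeff
  have hscale : (k.descFactorial m : ℂ) / β k ≠ 0 :=
    div_ne_zero (Nat.cast_ne_zero.2 (Nat.descFactorial_eq_zero_iff_lt.not.2 hk.not_gt))
      (ofReal_ne_zero.2 hβk)
  apply mul_left_cancel₀ hscale
  simp only [map_mul, map_div₀, map_pow, map_natCast, conj_ofReal, conj_conj] at hcoeff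
  linear_combination hcoeff

end IsGWCO

theorem stmt15_general (β : ℕ → ℝ) (hβ : WeightOK β) (m : ℕ)
    (w : ℂ) (hw : ‖w‖ = 1)
    (ψ φ : ℂ → ℂ)
    (T : Hs →L[ℂ] Hs) (hT : IsGWCO β m ψ φ T)
    (J : Hs → Hs) (hJ : ∀ (x : Hs) (n : ℕ), (J x : ℕ → ℂ) n = Jseq w (x : ℕ → ℂ) n)
    (hsym : ∀ x : Hs, T x = J (ContinuousLinearMap.adjoint T (J x)))
    (hherm : ContinuousLinearMap.adjoint T = T) :
    conj (ψ 0) = (conj w) ^ m * ψ 0 ∧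
    conj (ψ 0 * φ 0) = (conj w) ^ (m + 1) * (ψ 0 * φ 0) ∧
    (ψ 0 * φ 0 ≠ 0 → conj (φ 0) = conj w * φ 0) := by
  have hJTJ : ∀ x : Hs, T x = J (T (J x)) := by simpa only [hherm] using hsym
  have key {k : ℕ} (hk : m ≤ k) := hT.psi_mul_phi_pow_eq hJ hJTJ (hβ.1 k).ne' hk
  have h₀ : ψ 0 = conj (ψ 0) * w ^ m := by simpa using key le_rfl
  have h₁ : ψ 0 * φ 0 = conj (ψ 0) * w ^ (m + 1) * conj (φ 0) := by
    simpa using key m.le_succ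
  have hww : w * conj w = 1 := by
    rw [mul_conj, normSq_eq_norm_sq, hw, one_pow, ofReal_one]
  have hwwm (j : ℕ) : w ^ j * conj w ^ j = 1 := by rw [← mul_pow, hww, one_pow]
  refine ⟨by linear_combination (-conj w ^ m) * h₀ - conj (ψ 0) * hwwm m, ?_, fun hne => ?_⟩
  · rw [map_mul]
    linear_combination (-conj w ^ (m + 1)) * h₁ - conj (ψ 0) * conj (φ 0) * hwwm (m + 1)
  · have hψw : conj (ψ 0) * w ^ m ≠ 0 := h₀ ▸ left_ne_zero_of_mul hne
    have hφ : w * conj (φ 0) = φ 0 :=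
      mul_left_cancel₀ hψw (by linear_combination φ 0 * h₀ - h₁)
    linear_combination conj w * hφ - conj (φ 0) * hww

/-- if a `J_w`-symmetric `D_{m,ψ,φ}` is Hermitian then
`conj ψ(0) = conj(w)^m ψ(0)`, `conj(ψ(0)φ(0)) = conj(w)^{m+1} ψ(0)φ(0)`, and if
`ψ(0)φ(0) ≠ 0` then `conj φ(0) = conj w · φ(0)`. -/
theorem stmt15 (β : ℕ → ℝ) (hβ : WeightOK β) (m : ℕ) (hm : 1 ≤ m)
    (w : ℂ) (hw : ‖w‖ = 1)
    (ψ φ : ℂ → ℂ) (hφ : SelfMapD φ) (hψa : AnalyticOnNhd ℂ ψ (ball 0 1))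
    (hψ0 : ∃ z ∈ ball (0:ℂ) 1, ψ z ≠ 0)
    (T : Hs →L[ℂ] Hs) (hT : IsGWCO β m ψ φ T)
    (J : Hs → Hs) (hJ : ∀ (x : Hs) (n : ℕ), (J x : ℕ → ℂ) n = Jseq w (x : ℕ → ℂ) n)
    (hsym : ∀ x : Hs, T x = J (ContinuousLinearMap.adjoint T (J x)))
    (hherm : ContinuousLinearMap.adjoint T = T) :
    conj (ψ 0) = (conj w) ^ m * ψ 0 ∧
    conj (ψ 0 * φ 0) = (conj w) ^ (m + 1) * (ψ 0 * φ 0) ∧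
    (ψ 0 * φ 0 ≠ 0 → conj (φ 0) = conj w * φ 0) :=
  stmt15_general β hβ m w hw ψ φ T hT J hJ hsym hherm
end
end
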